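/- arXiv:1404.0931 — 5 statements merged into one kernel-verified Lean document; each statement's English description precedes it below -/
import Mathlib

section
/- Let G be a finite simple graph on n vertices and let u, v be vertices with d_G(u) ≥ 3 and d_G(v) = 1. Let G' be a graph on the same vertex set with d_{G'}(u) = d_G(u) − 1, d_{G'}(v) = 2, and d_{G'}(x) = d_G(x) for all other vertices x. If r denotes the number of vertices w ∉ {u,v} with 2 ≤ d_G(w) < d_G(u), then irr_t(G') − irr_t(G) = −2r − 2; in particular irr_t(G') < irr_t(G). -/
open Finset

/-- The total irregularity of a graph: half the sum over all ordered pairs of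
vertices of the absolute difference of degrees. -/
def irrT {V : Type*} [Fintype V] (G : SimpleGraph V) [DecidableRel G.Adj] : ℤ :=
  (∑ u : V, ∑ v : V, |(G.degree u : ℤ) - (G.degree v : ℤ)|) / 2

/-- The degree sequence of a graph, as a multiset of vertex degrees. -/
def degSeq {V : Type*} [Fintype V] (G : SimpleGraph V) [DecidableRel G.Adj] : Multiset ℕ :=
  Finset.univ.val.map (fun v => G.degree v)

/-!
Only the ordered pairs meeting `{u, v}` change their contribution to `irr_t`. The pair
`{u, v}` itself loses `2` (its gap `d - 1` shrinks to `d - 3`). For a third vertex `w` the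
changes of its gaps to `u` and to `v` cancel when `d_w ≥ d` or `d_w = 1`, while both gaps
shrink by `1` when `2 ≤ d_w < d`; the hypothesis on the degrees rules out every other case.
-/

section TwoPointChange

variable {V : Type*} [Fintype V] [DecidableEq V]

theorem sum_univ_eq_add_add_sum_compl_pair {M : Type*} [AddCommMonoid M] {u v : V}
    (huv : u ≠ v) (φ : V → M) : ∑ x, φ x = φ u + φ v + ∑ x ∈ {u, v}ᶜ, φ x := by
  rw [← sum_add_sum_compl {u, v} φ, sum_pair huv]

theorem sum_sum_abs_sub_of_eq_off_pair {f g : V → ℤ} {u v : V} (huv : u ≠ v)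
    (hfg : ∀ x, x ≠ u → x ≠ v → g x = f x) :
    ∑ x, ∑ y, |g x - g y| = ∑ x, ∑ y, |f x - f y| + 2 * ((|g u - g v| - |f u - f v|) +
      ∑ w ∈ {u, v}ᶜ, ((|g u - f w| - |f u - f w|) + (|g v - f w| - |f v - f w|))) := by
  set D : V → V → ℤ := fun x y => |g x - g y| - |f x - f y|
  have hD_symm : ∀ x y, D x y = D y x := fun x y => by
    simp only [D, abs_sub_comm (g x), abs_sub_comm (f x)]
  have hD_self : ∀ x, D x x = 0 := fun x => by simp [D]
  have hcompl : ∀ x ∈ ({u, v}ᶜ : Finset V), x ≠ u ∧ x ≠ v := fun x hx => by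
    simpa [not_or] using hx
  have hrow : ∀ x ∈ ({u, v}ᶜ : Finset V), ∑ y, D x y = D u x + D v x := fun x hx => by
    obtain ⟨hxu, hxv⟩ := hcompl x hx
    rw [sum_univ_eq_add_add_sum_compl_pair huv, hD_symm x u, hD_symm x v,
      sum_eq_zero fun y hy => ?_, add_zero]
    obtain ⟨hyu, hyv⟩ := hcompl y hy
    simp only [D, hfg x hxu hxv, hfg y hyu hyv, sub_self]
  have hsplit : ∑ x, ∑ y, D x y =
      2 * (D u v + ∑ w ∈ {u, v}ᶜ, (D u w + D v w)) := by
    rw [sum_univ_eq_add_add_sum_compl_pair huv, sum_congr rfl hrow,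
      sum_univ_eq_add_add_sum_compl_pair huv, sum_univ_eq_add_add_sum_compl_pair huv,
      hD_self, hD_self, hD_symm v u, sum_add_distrib]
    ring
  have hD_compl : ∀ w ∈ ({u, v}ᶜ : Finset V),
      D u w + D v w = (|g u - f w| - |f u - f w|) + (|g v - f w| - |f v - f w|) :=
    fun w hw => by
      obtain ⟨hwu, hwv⟩ := hcompl w hw
      simp only [D, hfg w hwu hwv]
  rw [← sum_congr rfl hD_compl, ← hsplit, ← sub_eq_iff_eq_add', ← sum_sub_distrib]
  exact sum_congr rfl fun x _ => (sum_sub_distrib _ _).symm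

end TwoPointChange

/-- The net change of `|d_u - e| + |d_v - e|` for a third vertex of degree `e`, when `d_u` drops
from `d` to `d - 1` and `d_v` rises from `1` to `2`. -/
theorem abs_sub_change_of_branch_move {d e : ℤ} (hd : 2 ≤ d)
    (he : d ≤ e ∨ e = 1 ∨ (2 ≤ e ∧ e < d)) :
    (|d - 1 - e| - |d - e|) + (|2 - e| - |1 - e|) = -2 * if 2 ≤ e ∧ e < d then 1 else 0 := by
  rcases he with he | he | he
  · rw [if_neg (by omega), abs_of_nonpos (by omega), abs_of_nonpos (by omega),
      abs_of_nonpos (by omega), abs_of_nonpos (by omega)]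
    ring
  · subst he
    rw [if_neg (by omega), abs_of_nonneg (by omega), abs_of_nonneg (by omega)]
    norm_num
  · rw [if_pos he, abs_of_nonneg (by omega), abs_of_nonneg (by omega),
      abs_of_nonpos (by omega), abs_of_nonpos (by omega)]
    ring

theorem branch_transformation {V : Type*} [Fintype V] [DecidableEq V]
    (G G' : SimpleGraph V) [DecidableRel G.Adj] [DecidableRel G'.Adj]
    (u v : V) (huv : u ≠ v) (hu : 3 ≤ G.degree u) (hv : G.degree v = 1)
    (hu' : G'.degree u = G.degree u - 1) (hv' : G'.degree v = 2)
    (hother : ∀ x : V, x ≠ u → x ≠ v → G'.degree x = G.degree x)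
    (hpart : ∀ w : V, G.degree u ≤ G.degree w ∨ G.degree w = 1 ∨
      (2 ≤ G.degree w ∧ G.degree w < G.degree u))
    (r : ℕ)
    (hr : r = (Finset.univ.filter
      (fun w : V => w ≠ u ∧ w ≠ v ∧ 2 ≤ G.degree w ∧ G.degree w < G.degree u)).card) :
    irrT G' - irrT G = -2 * r - 2 ∧ irrT G' < irrT G := by
  have hgu : (G'.degree u : ℤ) = G.degree u - 1 := by omega
  have hpair : |(G'.degree u : ℤ) - G'.degree v| - |(G.degree u : ℤ) - G.degree v| = -2 := by
    rw [hgu, hv, hv', abs_of_nonneg (by omega), abs_of_nonneg (by omega)]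
    push_cast
    ring
  have hrest : ∑ w ∈ ({u, v}ᶜ : Finset V),
      ((|(G'.degree u : ℤ) - G.degree w| - |(G.degree u : ℤ) - G.degree w|) +
        (|(G'.degree v : ℤ) - G.degree w| - |(G.degree v : ℤ) - G.degree w|)) = -2 * r := by
    simp only [hgu, hv, hv', Nat.cast_one, Nat.cast_ofNat]
    rw [sum_congr rfl fun w _ =>
        abs_sub_change_of_branch_move (by omega) (by have := hpart w; omega),
      ← mul_sum, sum_boole, hr]
    congr 3
    ext w
    simp [and_assoc]
  have hsum := sum_sum_abs_sub_of_eq_off_pair (f := fun x => (G.degree x : ℤ))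
    (g := fun x => (G'.degree x : ℤ)) huv (fun x hxu hxv => by simp [hother x hxu hxv])
  have hirr : irrT G' = irrT G + (-2 * r - 2) := by
    rw [irrT, irrT, hsum, hpair, hrest, Int.add_mul_ediv_left _ _ two_ne_zero]
    ring_nf
  omega
end

section
/- Every tree T on n ≥ 2 vertices satisfies irr_t(T) ≥ 2n − 4, with equality if and only if T is the path P_n (equivalently, if and only if the degree sequence of T is (2,…,2,1,1)). -/
/-!
Write `d` for the degree function and call `v` a leaf when `d v = 1`. For `a, b ≥ 1`,
`|a - b| ≥ [b = 1] (a - 1) + [a = 1] (b - 1)`, with equality when `a, b ≤ 2`. Summing over all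
pairs gives `∑ |d u - d v| ≥ 2 ℓ ∑ (d v - 1) = 2 ℓ (n - 2)` for a tree with `ℓ` leaves, since its
degrees sum to `2n - 2`. The same degree sum gives `ℓ - 2 = ∑_{d v ≠ 1} (d v - 2) ≥ 0`, so `ℓ ≥ 2`,
with equality exactly when every degree is at most `2`; otherwise `ℓ ≥ 3` and the bound exceeds
`4 (n - 2)` by at least `2`, which survives the halving in `irrT`.
-/

open Finset

lemma ite_sub_one_add_ite_sub_one_le_abs_sub {a b : ℕ} (ha : 1 ≤ a) (hb : 1 ≤ b) :
    (if b = 1 then (a - 1 : ℤ) else 0) + (if a = 1 then (b - 1 : ℤ) else 0) ≤ |(a - b : ℤ)| := by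
  split_ifs <;> rcases abs_cases ((a : ℤ) - b) with h | h <;> omega

lemma ite_sub_one_add_ite_sub_one_eq_abs_sub {a b : ℕ} (ha : 1 ≤ a) (hb : 1 ≤ b)
    (ha₂ : a ≤ 2) (hb₂ : b ≤ 2) :
    (if b = 1 then (a - 1 : ℤ) else 0) + (if a = 1 then (b - 1 : ℤ) else 0) = |(a - b : ℤ)| := by
  split_ifs <;> rcases abs_cases ((a : ℤ) - b) with h | h <;> omega

section DegreeFunction

variable {V : Type*} [Fintype V] (d : V → ℕ)

lemma sum_sum_ite_sub_one :
    ∑ u, ∑ v, ((if d v = 1 then (d u - 1 : ℤ) else 0) + (if d u = 1 then (d v - 1 : ℤ) else 0)) =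
      2 * #{v | d v = 1} * ∑ v, (d v - 1 : ℤ) := by
  have h : ∀ u, ∑ v, (if d v = 1 then (d u - 1 : ℤ) else 0) = #{v | d v = 1} * (d u - 1 : ℤ) :=
    fun u ↦ by rw [← sum_filter, sum_const, nsmul_eq_mul]
  simp_rw [sum_add_distrib]
  rw [sum_comm (f := fun u v ↦ if d u = 1 then (d v - 1 : ℤ) else 0)]
  simp_rw [h, ← mul_sum]
  ring

lemma two_mul_card_mul_le_sum_sum_abs_sub (hd : ∀ v, 1 ≤ d v) :
    2 * #{v | d v = 1} * ∑ v, (d v - 1 : ℤ) ≤ ∑ u, ∑ v, |(d u - d v : ℤ)| :=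
  sum_sum_ite_sub_one d ▸ sum_le_sum fun u _ ↦ sum_le_sum fun v _ ↦
    ite_sub_one_add_ite_sub_one_le_abs_sub (hd u) (hd v)

lemma sum_sum_abs_sub_eq_two_mul_card_mul (hd : ∀ v, 1 ≤ d v) (hd₂ : ∀ v, d v ≤ 2) :
    ∑ u, ∑ v, |(d u - d v : ℤ)| = 2 * #{v | d v = 1} * ∑ v, (d v - 1 : ℤ) :=
  sum_sum_ite_sub_one d ▸ (sum_congr rfl fun u _ ↦ sum_congr rfl fun v _ ↦
    ite_sub_one_add_ite_sub_one_eq_abs_sub (hd u) (hd v) (hd₂ u) (hd₂ v)).symm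

lemma sum_sub_two_add_card_eq_sum_ite :
    ∑ v, (d v - 2 : ℤ) + #{v | d v = 1} = ∑ v, (if d v = 1 then 0 else (d v - 2 : ℤ)) := by
  rw [card_eq_sum_ones, Nat.cast_sum, sum_filter, ← sum_add_distrib]
  refine sum_congr rfl fun v _ ↦ ?_
  split_ifs with h <;> simp [h]

lemma neg_sum_sub_two_le_card (hd : ∀ v, 1 ≤ d v) :
    -∑ v, (d v - 2 : ℤ) ≤ #{v | d v = 1} := by
  have hnonneg : 0 ≤ ∑ v, (if d v = 1 then 0 else (d v - 2 : ℤ)) :=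
    sum_nonneg fun v _ ↦ by have := hd v; split_ifs <;> omega
  linarith [sum_sub_two_add_card_eq_sum_ite d]

lemma card_eq_neg_sum_sub_two_iff (hd : ∀ v, 1 ≤ d v) :
    (#{v | d v = 1} : ℤ) = -∑ v, (d v - 2 : ℤ) ↔ ∀ v, d v ≤ 2 := by
  have hnonneg : ∀ v ∈ univ, 0 ≤ if d v = 1 then 0 else (d v - 2 : ℤ) :=
    fun v _ ↦ by have := hd v; split_ifs <;> omega
  have hzero : ∀ v, (if d v = 1 then 0 else (d v - 2 : ℤ)) = 0 ↔ d v ≤ 2 :=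
    fun v ↦ by have := hd v; split_ifs <;> omega
  have key : ∑ v, (if d v = 1 then 0 else (d v - 2 : ℤ)) = 0 ↔ ∀ v, d v ≤ 2 := by
    simp only [sum_eq_zero_iff_of_nonneg hnonneg, mem_univ, true_implies, hzero]
  rw [← key]
  have := sum_sub_two_add_card_eq_sum_ite d
  omega

lemma sum_sub_cast_eq (hsum : ∑ v, d v + 2 = 2 * Fintype.card V) (c : ℤ) :
    ∑ v, (d v - c : ℤ) = (2 - c) * Fintype.card V - 2 := by
  have hsumℤ : ∑ v, (d v : ℤ) + 2 = 2 * Fintype.card V := by exact_mod_cast hsum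
  rw [sum_sub_distrib, sum_const, card_univ, nsmul_eq_mul]
  linarith

lemma sum_sum_abs_sub_eq_of_forall_le_two (hd : ∀ v, 1 ≤ d v)
    (hsum : ∑ v, d v + 2 = 2 * Fintype.card V) (hd₂ : ∀ v, d v ≤ 2) :
    ∑ u, ∑ v, |(d u - d v : ℤ)| = 4 * (Fintype.card V - 2) := by
  have hleaves := (card_eq_neg_sum_sub_two_iff d hd).2 hd₂
  rw [sum_sub_cast_eq d hsum] at hleaves
  rw [sum_sum_abs_sub_eq_two_mul_card_mul d hd hd₂, hleaves, sum_sub_cast_eq d hsum]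
  ring

lemma add_two_le_sum_sum_abs_sub_of_exists_two_lt (hd : ∀ v, 1 ≤ d v)
    (hsum : ∑ v, d v + 2 = 2 * Fintype.card V) (h : ∃ v, 2 < d v) :
    4 * (Fintype.card V - 2 : ℤ) + 2 ≤ ∑ u, ∑ v, |(d u - d v : ℤ)| := by
  have hleaves₂ := neg_sum_sub_two_le_card d hd
  have hleaves_ne := mt (card_eq_neg_sum_sub_two_iff d hd).1 (by simpa using h)
  rw [sum_sub_cast_eq d hsum] at hleaves₂ hleaves_ne
  have hleaves₃ : (3 : ℤ) ≤ #{v | d v = 1} := by omega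
  have hcard : (#{v | d v = 1} : ℤ) ≤ Fintype.card V := by exact_mod_cast card_le_univ _
  have hbound := two_mul_card_mul_le_sum_sum_abs_sub d hd
  rw [sum_sub_cast_eq d hsum] at hbound
  nlinarith

lemma map_univ_val_eq_replicate_iff (hd : ∀ v, 1 ≤ d v)
    (hsum : ∑ v, d v + 2 = 2 * Fintype.card V) :
    univ.val.map d = Multiset.replicate (Fintype.card V - 2) 2 + {1, 1} ↔ ∀ v, d v ≤ 2 := by
  constructor
  · intro h v
    have hv : d v ∈ univ.val.map d := Multiset.mem_map_of_mem _ (mem_univ v)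
    rw [h] at hv
    simp only [Multiset.mem_add, Multiset.mem_replicate, Multiset.insert_eq_cons,
      Multiset.mem_cons, Multiset.mem_singleton] at hv
    omega
  · intro hd₂
    have hleaves := (card_eq_neg_sum_sub_two_iff d hd).2 hd₂
    rw [sum_sub_cast_eq d hsum] at hleaves
    have hleaves₂ : #{v | d v = 1} = 2 := by omega
    have hinner : #{v | ¬d v = 1} = Fintype.card V - 2 := by
      have := card_filter_add_card_filter_not (s := univ) (fun v ↦ d v = 1)
      rw [card_univ] at this
      omega
    have hleaf_map : (univ.filter (d · = 1)).val.map d = {1, 1} := by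
      change _ = Multiset.replicate 2 1
      rw [Multiset.eq_replicate, Multiset.card_map, card_val, hleaves₂, Multiset.forall_mem_map_iff]
      exact ⟨rfl, fun v hv ↦ (mem_filter.1 hv).2⟩
    have hinner_map : (univ.filter (¬d · = 1)).val.map d =
        Multiset.replicate (Fintype.card V - 2) 2 := by
      rw [Multiset.eq_replicate, Multiset.card_map, card_val, hinner, Multiset.forall_mem_map_iff]
      exact ⟨rfl, fun v hv ↦ by have := (mem_filter.1 hv).2; have := hd v; have := hd₂ v; omega⟩
    rw [← Multiset.filter_add_not (d · = 1) univ.val, Multiset.map_add, ← filter_val,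
      ← filter_val, hleaf_map, hinner_map, add_comm]

end DegreeFunction

namespace SimpleGraph.IsTree

variable {V : Type*} [Fintype V] {G : SimpleGraph V} [DecidableRel G.Adj]

lemma one_le_degree (hT : G.IsTree) (hV : 1 < Fintype.card V) (v : V) : 1 ≤ G.degree v :=
  have := Fintype.one_lt_card_iff_nontrivial.1 hV
  hT.connected.preconnected.degree_pos_of_nontrivial v

lemma sum_degrees_add_two (hT : G.IsTree) : ∑ v, G.degree v + 2 = 2 * Fintype.card V := by
  rw [sum_degrees_eq_twice_card_edges, ← hT.card_edgeFinset]
  ring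

end SimpleGraph.IsTree

theorem tree_min_irrT {V : Type*} [Fintype V] (G : SimpleGraph V) [DecidableRel G.Adj]
    (hT : G.IsTree) (n : ℕ) (hn : 2 ≤ n) (hcard : Fintype.card V = n) :
    2 * n - 4 ≤ irrT G ∧
      (irrT G = 2 * n - 4 ↔ degSeq G = Multiset.replicate (n - 2) 2 + {1, 1}) := by
  subst hcard
  have hd := hT.one_le_degree hn
  have hsum := hT.sum_degrees_add_two
  rw [degSeq, map_univ_val_eq_replicate_iff _ hd hsum, irrT]
  by_cases hd₂ : ∀ v, G.degree v ≤ 2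
  · rw [sum_sum_abs_sub_eq_of_forall_le_two _ hd hsum hd₂]
    exact ⟨by omega, iff_of_true (by omega) hd₂⟩
  · have hbound := add_two_le_sum_sum_abs_sub_of_exists_two_lt _ hd hsum (by simpa using hd₂)
    exact ⟨by omega, iff_of_false (by omega) hd₂⟩
end

section
/- Let n ≥ 5 and let T be a tree on n vertices that is not a path. Then irr_t(T) ≥ 4n − 10, with equality if and only if the degree sequence of T is (3, 2, …, 2, 1, 1, 1). -/
open Finset

/-!
Let `m` be the number of leaves of the tree. All other degrees are at least `2` and the degrees
sum to `2n - 2`, so the excesses `d - 1` of the non-leaves sum to `n - 2`: each leaf differs from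
the non-leaves by exactly `n - 2` in total, whence `irr_t(T) ≥ m (n - 2)`. The same count shows
that the non-leaf degrees exceed `2` by `m - 2` altogether. Hence `m ≥ 2`, `m = 2` only for the
path, and `m = 3` forces the degree sequence `(3, 2, …, 2, 1, 1, 1)`, whose irregularity is
`4n - 10`; for `m ≥ 4` the bound `m (n - 2) ≥ 4n - 8` is already larger.
-/

namespace Multiset

def absDiffSum (s : Multiset ℕ) : ℤ :=
  (s.map fun a : ℕ => (s.map fun b : ℕ => |(a : ℤ) - b|).sum).sum

lemma absDiffSum_nonneg (s : Multiset ℕ) : 0 ≤ absDiffSum s :=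
  sum_nonneg fun _ ha => by
    obtain ⟨a, -, rfl⟩ := mem_map.1 ha
    exact sum_nonneg fun _ hb => by
      obtain ⟨b, -, rfl⟩ := mem_map.1 hb
      exact abs_nonneg _

lemma absDiffSum_replicate_one_add (m : ℕ) {r : Multiset ℕ} (hr : ∀ a ∈ r, 1 ≤ a) :
    absDiffSum (replicate m 1 + r) = 2 * m * ((r.sum : ℤ) - card r) + absDiffSum r := by
  have habs_sub_one : (r.map fun a : ℕ => |(a : ℤ) - 1|) = r.map fun a : ℕ => (a : ℤ) - 1 :=
    map_congr rfl fun a ha => abs_of_nonneg (by have := hr a ha; omega)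
  have habs_one_sub : (r.map fun a : ℕ => |(1 : ℤ) - a|) = r.map fun a : ℕ => (a : ℤ) - 1 :=
    map_congr rfl fun a ha => by
      rw [abs_sub_comm]
      exact abs_of_nonneg (by have := hr a ha; omega)
  simp only [absDiffSum, map_add, sum_add, map_replicate, sum_replicate, Nat.cast_one, sub_self,
    abs_zero, smul_zero, zero_add, sum_map_add, sum_map_nsmul, habs_sub_one, habs_one_sub,
    sum_map_sub, map_const', Nat.cast_multiset_sum]
  simp only [nsmul_eq_mul, mul_one]
  ring

lemma absDiffSum_spider (k : ℕ) : absDiffSum (replicate k 2 + {3, 1, 1, 1}) = 8 * k + 12 := by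
  simp only [absDiffSum, insert_eq_cons, add_cons, map_cons, map_add, map_replicate, map_singleton,
    sum_cons, sum_add, sum_replicate, sum_singleton, nsmul_eq_mul]
  norm_num
  ring

lemma eq_replicate_two_of_sum_eq {r : Multiset ℕ} (hr : ∀ a ∈ r, 2 ≤ a)
    (hsum : r.sum = 2 * card r) : r = replicate (card r) 2 := by
  induction r using Multiset.induction_on with
  | empty => rfl
  | cons a r ih =>
    rw [forall_mem_cons] at hr
    rw [sum_cons, card_cons] at hsum
    have hlow : card r • 2 ≤ r.sum := card_nsmul_le_sum hr.2
    rw [smul_eq_mul] at hlow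
    obtain rfl : a = 2 := by omega
    rw [card_cons, replicate_succ, ← ih hr.2 (by omega)]

lemma eq_three_cons_replicate_two_of_sum_eq {r : Multiset ℕ} (hr : ∀ a ∈ r, 2 ≤ a)
    (hsum : r.sum = 2 * card r + 1) : r = 3 ::ₘ replicate (card r - 1) 2 := by
  induction r using Multiset.induction_on with
  | empty => simp at hsum
  | cons a r ih =>
    rw [forall_mem_cons] at hr
    rw [sum_cons, card_cons] at hsum
    have hlow : card r • 2 ≤ r.sum := card_nsmul_le_sum hr.2
    rw [smul_eq_mul] at hlow
    rw [card_cons, Nat.add_sub_cancel]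
    obtain rfl | rfl : a = 2 ∨ a = 3 := by omega
    · have hr' := ih hr.2 (by omega)
      have hcard : card r ≠ 0 := by rw [hr']; simp
      nth_rw 1 [hr']
      rw [cons_swap, ← replicate_succ, Nat.sub_add_cancel (Nat.one_le_iff_ne_zero.2 hcard)]
    · exact congrArg _ (eq_replicate_two_of_sum_eq hr.2 (by omega))

lemma replicate_count_one_add_filter_ne_one (s : Multiset ℕ) :
    replicate (count 1 s) 1 + s.filter (· ≠ 1) = s := by
  rw [← filter_eq', filter_add_not]

lemma card_filter_ne_one_add_count_one (s : Multiset ℕ) :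
    card (s.filter (· ≠ 1)) + count 1 s = card s := by
  conv_rhs => rw [← replicate_count_one_add_filter_ne_one s]
  rw [card_add, card_replicate, add_comm]

lemma sum_filter_ne_one_add_two {s : Multiset ℕ} (hsum : s.sum + 2 = 2 * card s) :
    (s.filter (· ≠ 1)).sum + 2 = 2 * card (s.filter (· ≠ 1)) + count 1 s := by
  have hsum' : (s.filter (· ≠ 1)).sum + count 1 s = s.sum := by
    conv_rhs => rw [← replicate_count_one_add_filter_ne_one s]
    rw [sum_add, sum_replicate, smul_eq_mul, mul_one, add_comm]
  have := card_filter_ne_one_add_count_one s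
  omega

lemma two_le_of_mem_filter_ne_one {s : Multiset ℕ} (hpos : ∀ a ∈ s, 1 ≤ a) :
    ∀ a ∈ s.filter (· ≠ 1), 2 ≤ a := by
  intro a ha
  rw [mem_filter] at ha
  have := hpos a ha.1
  omega

lemma two_le_count_one {s : Multiset ℕ} (hpos : ∀ a ∈ s, 1 ≤ a)
    (hsum : s.sum + 2 = 2 * card s) : 2 ≤ count 1 s := by
  have hlow := card_nsmul_le_sum (two_le_of_mem_filter_ne_one hpos)
  rw [smul_eq_mul] at hlow
  have := sum_filter_ne_one_add_two hsum
  omega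

lemma two_mul_count_one_mul_le_absDiffSum {s : Multiset ℕ} (hpos : ∀ a ∈ s, 1 ≤ a)
    (hsum : s.sum + 2 = 2 * card s) : 2 * count 1 s * ((card s : ℤ) - 2) ≤ absDiffSum s := by
  have h := absDiffSum_replicate_one_add (count 1 s)
    fun a ha => (two_le_of_mem_filter_ne_one hpos a ha).trans' one_le_two
  rw [replicate_count_one_add_filter_ne_one] at h
  have hcard := card_filter_ne_one_add_count_one s
  have hsum' := sum_filter_ne_one_add_two hsum
  have hrest := absDiffSum_nonneg (s.filter (· ≠ 1))
  have hexcess : ((s.filter (· ≠ 1)).sum : ℤ) - card (s.filter (· ≠ 1)) = card s - 2 := by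
    omega
  rw [h, hexcess]
  linarith

lemma eq_path_of_count_one_eq_two {s : Multiset ℕ} (hpos : ∀ a ∈ s, 1 ≤ a)
    (hsum : s.sum + 2 = 2 * card s) (h : count 1 s = 2) :
    s = replicate (card s - 2) 2 + {1, 1} := by
  have hr := eq_replicate_two_of_sum_eq (two_le_of_mem_filter_ne_one hpos)
    (by have := sum_filter_ne_one_add_two hsum; omega)
  have hcard : card (s.filter (· ≠ 1)) = card s - 2 := by
    have := card_filter_ne_one_add_count_one s; omega
  conv_lhs => rw [← replicate_count_one_add_filter_ne_one s, h, hr, hcard, add_comm]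
  rfl

lemma eq_spider_of_count_one_eq_three {s : Multiset ℕ} (hpos : ∀ a ∈ s, 1 ≤ a)
    (hsum : s.sum + 2 = 2 * card s) (h : count 1 s = 3) :
    s = replicate (card s - 4) 2 + {3, 1, 1, 1} := by
  have hr := eq_three_cons_replicate_two_of_sum_eq (two_le_of_mem_filter_ne_one hpos)
    (by have := sum_filter_ne_one_add_two hsum; omega)
  have hcard : card (s.filter (· ≠ 1)) - 1 = card s - 4 := by
    have := card_filter_ne_one_add_count_one s; omega
  conv_lhs => rw [← replicate_count_one_add_filter_ne_one s, h, hr, hcard]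
  ext a
  simp [count_cons, count_replicate, count_singleton]

end Multiset

lemma card_degSeq {V : Type*} [Fintype V] (G : SimpleGraph V) [DecidableRel G.Adj] :
    Multiset.card (degSeq G) = Fintype.card V := by
  rw [degSeq, Multiset.card_map, Finset.card_val, Finset.card_univ]

lemma irrT_eq_absDiffSum_degSeq {V : Type*} [Fintype V] (G : SimpleGraph V)
    [DecidableRel G.Adj] :
    irrT G = (degSeq G).absDiffSum / 2 := by
  simp only [irrT, Multiset.absDiffSum, degSeq, Multiset.map_map, Function.comp_def,
    Finset.sum_eq_multiset_sum]

namespace SimpleGraph.IsTree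

variable {V : Type*} [Fintype V] {G : SimpleGraph V} [DecidableRel G.Adj]

lemma one_le_of_mem_degSeq (hG : G.IsTree) (hV : 2 ≤ Fintype.card V) :
    ∀ a ∈ degSeq G, 1 ≤ a := by
  have : Nontrivial V := Fintype.one_lt_card_iff_nontrivial.1 hV
  intro a ha
  obtain ⟨v, -, rfl⟩ := Multiset.mem_map.1 ha
  exact hG.connected.preconnected.degree_pos_of_nontrivial v

lemma sum_degSeq_add_two (hG : G.IsTree) :
    (degSeq G).sum + 2 = 2 * Multiset.card (degSeq G) := by
  have hedges := hG.card_edgeFinset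
  have hdeg := G.sum_degrees_eq_twice_card_edges
  rw [Finset.sum_eq_multiset_sum] at hdeg
  rw [card_degSeq, degSeq, hdeg]
  omega

end SimpleGraph.IsTree

theorem tree_second_min_irrT {V : Type*} [Fintype V] (G : SimpleGraph V) [DecidableRel G.Adj]
    (hT : G.IsTree) (n : ℕ) (hn : 5 ≤ n) (hcard : Fintype.card V = n)
    (hnp : degSeq G ≠ Multiset.replicate (n - 2) 2 + {1, 1}) :
    4 * n - 10 ≤ irrT G ∧
      (irrT G = 4 * n - 10 ↔
        degSeq G = Multiset.replicate (n - 4) 2 + {3, 1, 1, 1}) := by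
  have hirr := irrT_eq_absDiffSum_degSeq G
  have hcard_s : Multiset.card (degSeq G) = n := (card_degSeq G).trans hcard
  have hpos := hT.one_le_of_mem_degSeq (by omega)
  have hsum := hT.sum_degSeq_add_two
  have hleaves := Multiset.two_le_count_one hpos hsum
  have hnot_path : Multiset.count 1 (degSeq G) ≠ 2 := fun h =>
    hnp (by rw [Multiset.eq_path_of_count_one_eq_two hpos hsum h, hcard_s])
  obtain h3 | h4 : Multiset.count 1 (degSeq G) = 3 ∨ 4 ≤ Multiset.count 1 (degSeq G) := by omega
  · have hs := Multiset.eq_spider_of_count_one_eq_three hpos hsum h3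
    rw [hcard_s] at hs
    have hirr_eq : irrT G = 4 * n - 10 := by
      rw [hirr, hs, Multiset.absDiffSum_spider]
      omega
    simp only [hirr_eq, hs, le_refl, true_and]
  · have hlow := Multiset.two_mul_count_one_mul_le_absDiffSum hpos hsum
    rw [hcard_s] at hlow
    have : (8 * n - 16 : ℤ) ≤ (degSeq G).absDiffSum := by
      have : (4 : ℤ) ≤ Multiset.count 1 (degSeq G) := by exact_mod_cast h4
      nlinarith
    have hcount : Multiset.count 1 (Multiset.replicate (n - 4) 2 + {3, 1, 1, 1}) = 3 := by
      simp [Multiset.count_replicate]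
    refine ⟨by omega, iff_of_false (by omega) fun hs => ?_⟩
    rw [hs] at h4
    omega
end

section
/- Let n ≥ 4 and let G be a unicyclic graph on n vertices that is not a cycle. Then irr_t(G) ≥ 2n − 2, with equality if and only if the degree sequence of G is (3, 2, …, 2, 1). -/
open Finset

/-!
Put `f v = deg v - 2`; the handshake lemma and `|E| = |V| = n` give `∑ f = 0`. For each `u`,
`n * |f u| = |∑_v (deg u - deg v)| ≤ ∑_v |deg u - deg v|`, so the doubled total irregularity
is at least `n * ∑ |f|`. The number `∑ |f|` is even (it has the parity of `∑ f = 0`) and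
nonzero (the graph is not 2-regular). If it is at least `4`, then `irr_t ≥ 2n`. Otherwise it
equals `2`, which forces one vertex of degree `3`, one of degree `1` and all others of degree
`2`, and for that degree sequence `irr_t = 2n - 2`.
-/

theorem Int.even_sum_abs_iff {ι : Type*} (s : Finset ι) (f : ι → ℤ) :
    Even (∑ i ∈ s, |f i|) ↔ Even (∑ i ∈ s, f i) := by
  rw [← Int.even_sub, ← sum_sub_distrib]
  exact even_sum _ fun i _ => Int.even_sub.mpr even_abs

section

variable {ι : Type*} [Fintype ι]

theorem card_mul_sum_abs_sub_le_sum_sum_abs_sub {R : Type*} [CommRing R] [LinearOrder R]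
    [IsStrictOrderedRing R] {d : ι → R} {c : R} (hd : ∑ i, (d i - c) = 0) :
    Fintype.card ι * ∑ i, |d i - c| ≤ ∑ i, ∑ j, |d i - d j| := by
  rw [mul_sum]
  gcongr with i
  calc (Fintype.card ι : R) * |d i - c| = |∑ j, ((d i - c) - (d j - c))| := by
        rw [sum_sub_distrib, hd, sum_const, card_univ, nsmul_eq_mul, sub_zero, abs_mul,
          Nat.abs_cast]
    _ = |∑ j, (d i - d j)| := by simp only [sub_sub_sub_cancel_right]
    _ ≤ ∑ j, |d i - d j| := abs_sum_le_sum_abs _ _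

theorem Int.exists_eq_one_of_sum_eq_one [DecidableEq ι] {g : ι → ℤ} (hg : ∀ i, 0 ≤ g i)
    (hsum : ∑ i, g i = 1) : ∃ a, g a = 1 ∧ ∀ i, i ≠ a → g i = 0 := by
  obtain ⟨a, -, ha⟩ := exists_ne_zero_of_sum_ne_zero (hsum.trans_ne one_ne_zero)
  have hrest : 0 ≤ ∑ i ∈ univ.erase a, g i := sum_nonneg fun i _ => hg i
  have hsplit := add_sum_erase univ g (mem_univ a)
  have hga : g a = 1 := by have := hg a; omega
  refine ⟨a, hga, fun i hi => ?_⟩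
  exact (sum_eq_zero_iff_of_nonneg fun i _ => hg i).mp (by omega) i
    (mem_erase.mpr ⟨hi, mem_univ i⟩)

theorem Int.exists_eq_one_eq_neg_one_of_sum_abs_eq_two [DecidableEq ι] {f : ι → ℤ}
    (hsum : ∑ i, f i = 0) (habs : ∑ i, |f i| = 2) :
    ∃ a b, a ≠ b ∧ f a = 1 ∧ f b = -1 ∧ ∀ i, i ≠ a → i ≠ b → f i = 0 := by
  have hadd : ∑ i, (f i)⁺ + ∑ i, (f i)⁻ = 2 := by
    simp only [← sum_add_distrib, posPart_add_negPart, habs]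
  have hsub : ∑ i, (f i)⁺ - ∑ i, (f i)⁻ = 0 := by
    simp only [← sum_sub_distrib, posPart_sub_negPart, hsum]
  obtain ⟨a, ha, ha0⟩ := exists_eq_one_of_sum_eq_one (fun i => posPart_nonneg (f i)) (by omega)
  obtain ⟨b, hb, hb0⟩ := exists_eq_one_of_sum_eq_one (fun i => negPart_nonneg (f i)) (by omega)
  have hparts : ∀ i, (f i)⁺ = max (f i) 0 ∧ (f i)⁻ = max (-f i) 0 := fun i => ⟨rfl, rfl⟩
  refine ⟨a, b, fun h => ?_, ?_, ?_, fun i hia hib => ?_⟩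
  · subst h; have := hparts a; omega
  · have := hparts a; omega
  · have := hparts b; omega
  · have := hparts i; have := ha0 i hia; have := hb0 i hib; omega

theorem Finset.univ_val_map_eq_cons_cons_replicate {α : Type*} [DecidableEq ι] {d : ι → α}
    {a b : ι} (hab : a ≠ b) {c : α} (hc : ∀ i, i ≠ a → i ≠ b → d i = c) :
    univ.val.map d = d a ::ₘ d b ::ₘ Multiset.replicate (Fintype.card ι - 2) c := by
  have hb : b ∈ univ.erase a := mem_erase.mpr ⟨hab.symm, mem_univ b⟩
  have hrest : ∀ i ∈ ((univ.erase a).erase b).val, d i = c := fun i hi => by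
    simp only [mem_val, mem_erase] at hi
    exact hc i hi.2.1 hi.1
  have ha : a ∉ insert b ((univ.erase a).erase b) := by simp [hab]
  rw [← insert_erase (mem_univ a), ← insert_erase hb, insert_val_of_notMem ha,
    insert_val_of_notMem (notMem_erase b _), Multiset.map_cons, Multiset.map_cons,
    Multiset.map_congr rfl hrest, Multiset.map_const', card_val, card_erase_of_mem hb,
    card_erase_of_mem (mem_univ a), card_univ, Nat.sub_sub]

end

namespace SimpleGraph

variable {V : Type*} [Fintype V] (G : SimpleGraph V) [DecidableRel G.Adj]

theorem sum_degree_sub_two_eq_zero (h : #G.edgeFinset = Fintype.card V) :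
    ∑ v, ((G.degree v : ℤ) - 2) = 0 := by
  rw [sum_sub_distrib, ← Nat.cast_sum, sum_degrees_eq_twice_card_edges, h, sum_const, card_univ,
    nsmul_eq_mul]
  push_cast
  ring

theorem degSeq_eq_of_sum_abs_degree_sub_two_eq_two [DecidableEq V]
    (hsum : ∑ v, ((G.degree v : ℤ) - 2) = 0) (habs : ∑ v, |(G.degree v : ℤ) - 2| = 2) :
    degSeq G = Multiset.replicate (Fintype.card V - 2) 2 + {3, 1} := by
  obtain ⟨a, b, hab, ha, hb, hrest⟩ := Int.exists_eq_one_eq_neg_one_of_sum_abs_eq_two hsum habs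
  have hrest' : ∀ v, v ≠ a → v ≠ b → G.degree v = 2 := fun v hva hvb => by
    have := hrest v hva hvb
    omega
  rw [degSeq, univ_val_map_eq_cons_cons_replicate hab hrest', show G.degree a = 3 by omega,
    show G.degree b = 1 by omega, add_comm]
  rfl

theorem irrT_eq_degSeq_sum :
    irrT G = ((degSeq G).map fun x : ℕ =>
      ((degSeq G).map fun y : ℕ => |(x : ℤ) - y|).sum).sum / 2 := by
  simp only [irrT, degSeq, Multiset.map_map, Function.comp_def, ← sum_eq_multiset_sum]

theorem irrT_eq_of_degSeq_eq {n : ℕ} (hcard : Fintype.card V = n)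
    (h : degSeq G = Multiset.replicate (n - 2) 2 + {3, 1}) : irrT G = 2 * n - 2 := by
  have hn : 2 ≤ n := by
    have := congrArg Multiset.card h
    simp only [degSeq, Multiset.card_map, card_val, card_univ, hcard, Multiset.card_add,
      Multiset.card_replicate, Multiset.insert_eq_cons, Multiset.card_cons,
      Multiset.card_singleton] at this
    omega
  rw [irrT_eq_degSeq_sum, h]
  obtain ⟨m, rfl⟩ := Nat.exists_eq_add_of_le' hn
  simp only [add_tsub_cancel_right, Multiset.insert_eq_cons, Multiset.add_cons, Multiset.map_cons,
    Nat.cast_ofNat, Multiset.map_add, Multiset.map_replicate, Multiset.map_singleton, Nat.cast_one,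
    Multiset.sum_cons, Multiset.sum_add, Multiset.sum_replicate, Int.nsmul_eq_mul,
    Multiset.sum_singleton, sub_self, abs_zero, Int.reduceSub, abs_one, mul_one, Nat.abs_ofNat,
    zero_add, abs_neg, mul_zero, Int.reduceAdd, add_zero, Nat.cast_add]
  omega

end SimpleGraph

theorem unicyclic_second_min_irrT_general {V : Type*} [Fintype V] (G : SimpleGraph V)
    [DecidableRel G.Adj]
    (n : ℕ) (hcard : Fintype.card V = n)
    (hedges : G.edgeFinset.card = n)
    (hnotcycle : ¬ ∀ v : V, G.degree v = 2) :
    2 * n - 2 ≤ irrT G ∧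
      (irrT G = 2 * n - 2 ↔ degSeq G = Multiset.replicate (n - 2) 2 + {3, 1}) := by
  classical
  have hcentered := G.sum_degree_sub_two_eq_zero (hedges.trans hcard.symm)
  have hbound := card_mul_sum_abs_sub_le_sum_sum_abs_sub hcentered
  have heven := (Int.even_sum_abs_iff univ _).mpr (by rw [hcentered]; exact Even.zero)
  have hnonneg : 0 ≤ ∑ v, |(G.degree v : ℤ) - 2| := sum_nonneg fun v _ => abs_nonneg _
  have hne : ∑ v, |(G.degree v : ℤ) - 2| ≠ 0 := fun h => hnotcycle fun v => by
    have := (sum_eq_zero_iff_of_nonneg fun v _ => abs_nonneg _).mp h v (mem_univ v)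
    have := abs_eq_zero.mp this
    omega
  set S := ∑ v, |(G.degree v : ℤ) - 2|
  rw [hcard] at hbound
  obtain ⟨k, hk⟩ := heven
  obtain hS | hS : S = 2 ∨ 4 ≤ S := by omega
  · have hdeg := hcard ▸ G.degSeq_eq_of_sum_abs_degree_sub_two_eq_two hcentered hS
    have hirr := G.irrT_eq_of_degSeq_eq hcard hdeg
    exact ⟨hirr.ge, iff_of_true hirr hdeg⟩
  · have hirr : 2 * n ≤ irrT G := by
      have : (n : ℤ) * 4 ≤ n * S := mul_le_mul_of_nonneg_left hS n.cast_nonneg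
      unfold irrT
      omega
    exact ⟨by omega, iff_of_false (by omega) fun hdeg => by
      have := G.irrT_eq_of_degSeq_eq hcard hdeg
      omega⟩

theorem unicyclic_second_min_irrT {V : Type*} [Fintype V] (G : SimpleGraph V)
    [DecidableRel G.Adj]
    (hconn : G.Connected) (n : ℕ) (hn : 4 ≤ n) (hcard : Fintype.card V = n)
    (hedges : G.edgeFinset.card = n)
    (hnotcycle : ¬ ∀ v : V, G.degree v = 2) :
    2 * n - 2 ≤ irrT G ∧
      (irrT G = 2 * n - 2 ↔ degSeq G = Multiset.replicate (n - 2) 2 + {3, 1}) :=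
  unicyclic_second_min_irrT_general G n hcard hedges hnotcycle
end

section
/- Every bicyclic graph G on n ≥ 7 vertices satisfies irr_t(G) ≥ 2n − 4, with equality if and only if the degree sequence of G is (3, 3, 2, …, 2). -/
open Finset

/-!
Write `M(d) = ∑ u, ∑ v, (d v - d u)⁺`, so that `irr_t = M(deg)`. For any set `H` of vertices,
counting only the pairs `u ∉ H`, `v ∈ H` gives `M(d) ≥ n ∑_{v ∈ H} d v - |H| ∑_v d v`. Take `H` to
be the vertices of degree at least `3` and `t = ∑_{v ∈ H} (d v - 2)` its excess over degree `2`.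
As `∑_v (d v - 2) = 2`, we have `t ≥ 2` and `t ≥ |H|`, and the bound reads `M(d) ≥ n t - 2|H|`,
which is at least `2n - 4`, with equality only if `|H| = t = 2`, i.e. if the degrees are
`3, 3, 2, …, 2`; for that degree sequence `M(d) = 2(n - 2)` by direct count.
-/

section DegreeFunction

variable {V : Type*} [Fintype V]

lemma sum_sum_abs_sub_eq_two_mul_sum_sum_posPart (f : V → ℤ) :
    ∑ u, ∑ v, |f u - f v| = 2 * ∑ u, ∑ v, (f v - f u)⁺ := by
  have hsplit (u v : V) : |f u - f v| = (f u - f v)⁺ + (f v - f u)⁺ := by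
    rw [← posPart_add_negPart, ← posPart_neg, neg_sub]
  simp only [hsplit, sum_add_distrib]
  rw [sum_comm (f := fun u v => (f u - f v)⁺)]
  ring

lemma card_mul_sum_sub_card_mul_sum_le (f : V → ℤ) (s : Finset V) :
    Fintype.card V * ∑ v ∈ s, f v - #s * ∑ v, f v ≤ ∑ u, ∑ v, (f v - f u)⁺ := by
  classical
  calc Fintype.card V * ∑ v ∈ s, f v - #s * ∑ v, f v
      = ∑ u ∈ sᶜ, ∑ v ∈ s, (f v - f u) := by
        simp only [sum_sub_distrib, sum_const, nsmul_eq_mul, ← sum_compl_add_sum s f,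
          card_compl, ← mul_sum]
        rw [Nat.cast_sub (card_le_univ s)]
        ring
    _ ≤ ∑ u ∈ sᶜ, ∑ v ∈ s, (f v - f u)⁺ := by gcongr; exact le_posPart _
    _ ≤ ∑ u, ∑ v, (f v - f u)⁺ := by
        refine sum_le_sum_of_subset_of_nonneg (subset_univ _) (fun u _ _ => ?_) |>.trans ?_
        · exact sum_nonneg fun v _ => posPart_nonneg _
        · exact sum_le_sum fun u _ =>
            sum_le_sum_of_subset_of_nonneg (subset_univ s) fun v _ _ => posPart_nonneg _

lemma sum_sum_posPart_eq_multiset_sum (d : V → ℕ) :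
    ∑ u, ∑ v, ((d v : ℤ) - d u)⁺ =
      ((univ.val.map d).map fun a : ℕ =>
        ((univ.val.map d).map fun b : ℕ => ((b : ℤ) - a)⁺).sum).sum := by
  simp only [Multiset.map_map, Function.comp_def, sum_map_val]

lemma map_univ_eq_replicate_add_replicate (d : V → ℕ) (s : Finset V) {a b : ℕ}
    (ha : ∀ v ∉ s, d v = a) (hb : ∀ v ∈ s, d v = b) :
    univ.val.map d = Multiset.replicate (Fintype.card V - #s) a + Multiset.replicate #s b := by
  classical
  have hcard : #(univ.filter (· ∉ s)) = Fintype.card V - #s := by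
    rw [filter_notMem_eq_sdiff, card_univ_sdiff]
  rw [← Multiset.filter_add_not (· ∉ s) univ.val, Multiset.map_add, ← filter_val, ← filter_val,
    Multiset.map_congr rfl (fun v hv => ha v (mem_filter.1 hv).2),
    Multiset.map_congr rfl (fun v hv => hb v (by simpa using (mem_filter.1 hv).2)),
    Multiset.map_const', Multiset.map_const', card_val, card_val, hcard]
  simp

lemma two_mul_sub_four_le_mul_sub (N h t : ℤ) (hN : 3 ≤ N) (hht : h ≤ t) (ht : 2 ≤ t) :
    2 * N - 4 ≤ N * t - 2 * h ∧ (N * t - 2 * h ≤ 2 * N - 4 → h = 2 ∧ t = 2) := by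
  rcases le_or_gt h 2 with hh2 | hh3
  · exact ⟨by nlinarith, fun hle => ⟨by nlinarith, by nlinarith⟩⟩
  · exact ⟨by nlinarith, fun hle => by nlinarith⟩

lemma sum_sub_two_eq_two {d : V → ℕ} (hsum : ∑ v, d v = 2 * Fintype.card V + 2) :
    ∑ v, ((d v : ℤ) - 2) = 2 := by
  rw [sum_sub_distrib, sum_const, card_univ, nsmul_eq_mul, ← Nat.cast_sum, hsum]
  push_cast
  ring

lemma sum_filter_not_sub_two_eq {d : V → ℕ} (hsum : ∑ v, d v = 2 * Fintype.card V + 2) :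
    ∑ v ∈ {v | ¬3 ≤ d v}, ((d v : ℤ) - 2) = 2 - ∑ v ∈ {v | 3 ≤ d v}, ((d v : ℤ) - 2) := by
  linarith [sum_sub_two_eq_two hsum,
    sum_filter_add_sum_filter_not univ (3 ≤ d ·) fun v => (d v : ℤ) - 2]

lemma card_le_sum_sub_two (d : V → ℕ) :
    (#{v | 3 ≤ d v} : ℤ) ≤ ∑ v ∈ {v | 3 ≤ d v}, ((d v : ℤ) - 2) := by
  rw [card_eq_sum_ones, Nat.cast_sum]
  exact sum_le_sum fun v hv => by simp only [mem_filter, mem_univ, true_and] at hv; omega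

lemma two_le_sum_sub_two {d : V → ℕ} (hsum : ∑ v, d v = 2 * Fintype.card V + 2) :
    2 ≤ ∑ v ∈ {v | 3 ≤ d v}, ((d v : ℤ) - 2) := by
  have hlow : ∑ v ∈ {v | ¬3 ≤ d v}, ((d v : ℤ) - 2) ≤ 0 := sum_nonpos fun v hv => by
    simp only [mem_filter, mem_univ, true_and] at hv; omega
  linarith [sum_filter_not_sub_two_eq hsum]

lemma map_univ_eq_of_excess_eq_two {d : V → ℕ} (hsum : ∑ v, d v = 2 * Fintype.card V + 2)
    (hH : #{v | 3 ≤ d v} = 2) (ht : ∑ v ∈ {v | 3 ≤ d v}, ((d v : ℤ) - 2) = 2) :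
    univ.val.map d = Multiset.replicate (Fintype.card V - 2) 2 + {3, 3} := by
  have hb : ∀ v ∈ ({v | 3 ≤ d v} : Finset V), d v = 3 := by
    have hone : ∀ v ∈ ({v | 3 ≤ d v} : Finset V), (1 : ℤ) ≤ d v - 2 := fun v hv => by
      simp only [mem_filter, mem_univ, true_and] at hv; omega
    have hterm := (sum_eq_sum_iff_of_le hone).1 (ht.trans (by simp [hH])).symm
    intro v hv
    have := hterm v hv
    omega
  have ha : ∀ v ∉ ({v | 3 ≤ d v} : Finset V), d v = 2 := by
    have hnonpos : ∀ v ∈ ({v | ¬3 ≤ d v} : Finset V), (d v : ℤ) - 2 ≤ 0 := fun v hv => by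
      simp only [mem_filter, mem_univ, true_and] at hv; omega
    have hterm := (sum_eq_zero_iff_of_nonpos hnonpos).1
      (by rw [sum_filter_not_sub_two_eq hsum, ht, sub_self])
    intro v hv
    have := hterm v (by simpa using hv)
    omega
  rw [map_univ_eq_replicate_add_replicate d _ ha hb, hH]
  rfl

theorem two_mul_card_sub_four_le_sum_sum_posPart {d : V → ℕ}
    (hsum : ∑ v, d v = 2 * Fintype.card V + 2) (hV : 3 ≤ Fintype.card V) :
    2 * (Fintype.card V : ℤ) - 4 ≤ ∑ u, ∑ v, ((d v : ℤ) - d u)⁺ ∧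
      (∑ u, ∑ v, ((d v : ℤ) - d u)⁺ = 2 * (Fintype.card V : ℤ) - 4 ↔
        univ.val.map d = Multiset.replicate (Fintype.card V - 2) 2 + {3, 3}) := by
  set H : Finset V := {v | 3 ≤ d v}
  set t := ∑ v ∈ H, ((d v : ℤ) - 2)
  have hM : Fintype.card V * t - 2 * #H ≤ ∑ u, ∑ v, ((d v : ℤ) - d u)⁺ := by
    have := card_mul_sum_sub_card_mul_sum_le (fun v => (d v : ℤ)) H
    have htot : ∑ v, (d v : ℤ) = 2 * Fintype.card V + 2 := by exact_mod_cast hsum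
    simp only [t, sum_sub_distrib, sum_const, nsmul_eq_mul, htot] at this ⊢
    linarith
  obtain ⟨hbound, hbound_eq⟩ := two_mul_sub_four_le_mul_sub (Fintype.card V) #H t
    (by exact_mod_cast hV) (card_le_sum_sub_two d) (two_le_sum_sub_two hsum)
  refine ⟨hbound.trans hM, fun hMeq => ?_, fun hmap => ?_⟩
  · obtain ⟨hH, ht⟩ := hbound_eq (hM.trans hMeq.le)
    exact map_univ_eq_of_excess_eq_two hsum (by exact_mod_cast hH) ht
  · rw [sum_sum_posPart_eq_multiset_sum, hmap]
    simp [Nat.cast_sub (by omega : 2 ≤ Fintype.card V), mul_sub, mul_comm]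

end DegreeFunction

lemma irrT_eq_sum_sum_posPart {V : Type*} [Fintype V] (G : SimpleGraph V) [DecidableRel G.Adj] :
    irrT G = ∑ u, ∑ v, ((G.degree v : ℤ) - G.degree u)⁺ := by
  rw [irrT, sum_sum_abs_sub_eq_two_mul_sum_sum_posPart (fun v => (G.degree v : ℤ))]
  omega

theorem bicyclic_min_irrT_general {V : Type*} [Fintype V] (G : SimpleGraph V)
    [DecidableRel G.Adj]
    (n : ℕ) (hn : 7 ≤ n) (hcard : Fintype.card V = n)
    (hedges : G.edgeFinset.card = n + 1) :
    2 * n - 4 ≤ irrT G ∧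
      (irrT G = 2 * n - 4 ↔ degSeq G = Multiset.replicate (n - 2) 2 + {3, 3}) := by
  classical
  subst hcard
  have hsum : ∑ v, G.degree v = 2 * Fintype.card V + 2 := by
    rw [G.sum_degrees_eq_twice_card_edges, hedges]
    ring
  rw [irrT_eq_sum_sum_posPart]
  exact two_mul_card_sub_four_le_sum_sum_posPart hsum (by omega)

theorem bicyclic_min_irrT {V : Type*} [Fintype V] (G : SimpleGraph V)
    [DecidableRel G.Adj]
    (hconn : G.Connected) (n : ℕ) (hn : 7 ≤ n) (hcard : Fintype.card V = n)
    (hedges : G.edgeFinset.card = n + 1) :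
    2 * n - 4 ≤ irrT G ∧
      (irrT G = 2 * n - 4 ↔ degSeq G = Multiset.replicate (n - 2) 2 + {3, 3}) :=
  bicyclic_min_irrT_general G n hn hcard hedges
end
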